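/- On X = [0,1], let f1 be the tent map (f1(x) = 2x for 0 ≤ x ≤ 1/2 and f1(x) = 2 − 2x for 1/2 < x ≤ 1) and let f2(x) = 1 − 2x for 0 ≤ x ≤ 1/2 and f2(x) = 2x − 1 for 1/2 < x ≤ 1 (so f2 = 1 − f1). Then the multiple mapping F = {f1, f2} is Hausdorff metric sensitive: there exists δ > 0 such that every nonempty open U ⊆ [0,1] contains points x, y with d_H(F^n(x), F^n(y)) > δ for some n ≥ 1. -/

import Mathlib

open TopologicalSpace

/-- `mIter f₁ f₂ n x` is the set `F^n(x)` for the multiple mapping `F = {f₁, f₂}`: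
all points `f_{i₁} ∘ ⋯ ∘ f_{iₙ} (x)` with `i₁, …, iₙ ∈ {1, 2}`. -/
def mIter {X : Type*} (f₁ f₂ : X → X) : ℕ → X → Set X
  | 0, x => {x}
  | n + 1, x => f₁ '' mIter f₁ f₂ n x ∪ f₂ '' mIter f₁ f₂ n x

lemma mIter_finite {X : Type*} (f₁ f₂ : X → X) (n : ℕ) (x : X) :
    (mIter f₁ f₂ n x).Finite := by
  induction n with
  | zero => exact Set.finite_singleton x
  | succ n ih => exact (ih.image f₁).union (ih.image f₂)

lemma mIter_nonempty {X : Type*} (f₁ f₂ : X → X) (n : ℕ) (x : X) :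
    (mIter f₁ f₂ n x).Nonempty := by
  induction n with
  | zero => exact ⟨x, rfl⟩
  | succ n ih => exact (ih.image f₁).mono Set.subset_union_left

/-- `F^n(x)` as a nonempty compact subset of `X`. -/
def mIterNC {X : Type*} [TopologicalSpace X] (f₁ f₂ : X → X) (n : ℕ) (x : X) :
    NonemptyCompacts X :=
  ⟨⟨mIter f₁ f₂ n x, (mIter_finite f₁ f₂ n x).isCompact⟩, mIter_nonempty f₁ f₂ n x⟩

/-- The deleted orbit of `x` under `F = {f₁, f₂}`: the family `{F^n(x) : n ≥ 1}`. -/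
def deletedOrbit {X : Type*} (f₁ f₂ : X → X) (x : X) : Set (Set X) :=
  {S | ∃ n, 1 ≤ n ∧ S = mIter f₁ f₂ n x}

/-- `x` is a periodic point of `F = {f₁, f₂}`: its deleted orbit is finite and
`x ∈ F^m(x)` for some `m ≥ 1`. -/
def MPeriodicPt {X : Type*} (f₁ f₂ : X → X) (x : X) : Prop :=
  (deletedOrbit f₁ f₂ x).Finite ∧ ∃ m, 1 ≤ m ∧ x ∈ mIter f₁ f₂ m x

/-- `Ran(F) = {F^n(x) : n ≥ 1, x ∈ X}` as a set of nonempty compact subsets of `X`. -/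
def mRan {X : Type*} [TopologicalSpace X] (f₁ f₂ : X → X) : Set (NonemptyCompacts X) :=
  {K | ∃ n, 1 ≤ n ∧ ∃ x, K = mIterNC f₁ f₂ n x}

/-- Transitivity of the multiple mapping `F = {f₁, f₂}`: for every nonempty open
`U ⊆ X` and every nonempty relatively open subset `𝒰` of `Ran(F)` (in the Hausdorff
metric on nonempty compact subsets), there are `n ≥ 1` and `u ∈ U` with `F^n(u) ∈ 𝒰`. -/
def MTransitive {X : Type*} [MetricSpace X] (f₁ f₂ : X → X) : Prop :=
  ∀ U : Set X, IsOpen U → U.Nonempty →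
    ∀ 𝒰 : Set (NonemptyCompacts X), 𝒰.Nonempty →
      (∃ V : Set (NonemptyCompacts X), IsOpen V ∧ 𝒰 = V ∩ mRan f₁ f₂) →
      ∃ n, 1 ≤ n ∧ ∃ u ∈ U, mIterNC f₁ f₂ n u ∈ 𝒰

/-- Hausdorff metric sensitivity of the multiple mapping `F = {f₁, f₂}`;
`dist` on `NonemptyCompacts X` is the Hausdorff metric `d_H`. -/
def MSensitive {X : Type*} [MetricSpace X] (f₁ f₂ : X → X) : Prop :=
  ∃ δ > (0 : ℝ), ∀ U : Set X, IsOpen U → U.Nonempty →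
    ∃ x ∈ U, ∃ y ∈ U, ∃ n, 1 ≤ n ∧ δ < dist (mIterNC f₁ f₂ n x) (mIterNC f₁ f₂ n y)

/-- Topological transitivity of a single map. -/
def MapTransitive {X : Type*} [TopologicalSpace X] (f : X → X) : Prop :=
  ∀ U V : Set X, IsOpen U → U.Nonempty → IsOpen V → V.Nonempty →
    ∃ n, 1 ≤ n ∧ (f^[n] '' U ∩ V).Nonempty

/-- Sensitivity of a single map. -/
def MapSensitive {X : Type*} [MetricSpace X] (f : X → X) : Prop :=
  ∃ δ > (0 : ℝ), ∀ U : Set X, IsOpen U → U.Nonempty →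
    ∃ x ∈ U, ∃ y ∈ U, ∃ n, 1 ≤ n ∧ δ < dist (f^[n] x) (f^[n] y)

/-- The unit interval `[0,1]` with the Euclidean metric. -/
abbrev UI : Type := Set.Icc (0 : ℝ) 1

/-- The tent map on `[0,1]`: `2x` for `x ≤ 1/2`, `2 - 2x` for `x > 1/2`. -/
noncomputable def tent (x : UI) : UI :=
  ⟨if (x : ℝ) ≤ 1 / 2 then 2 * x else 2 - 2 * x, by
    have h0 := x.2.1; have h1 := x.2.2
    split_ifs with h <;> exact ⟨by nlinarith, by nlinarith⟩⟩

/-- The map `x ↦ 1 - tent x` on `[0,1]`: `1 - 2x` for `x ≤ 1/2`, `2x - 1` for `x > 1/2`. -/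
noncomputable def tentc (x : UI) : UI :=
  ⟨if (x : ℝ) ≤ 1 / 2 then 1 - 2 * x else 2 * x - 1, by
    have h0 := x.2.1; have h1 := x.2.2
    split_ifs with h <;> exact ⟨by nlinarith, by nlinarith⟩⟩

/-- The map `x ↦ min (2x) 1` on `[0,1]`. -/
noncomputable def mmap₁ (x : UI) : UI :=
  ⟨min (2 * x) 1, le_min (by have := x.2.1; linarith) zero_le_one, min_le_right _ _⟩

/-- The map `x ↦ min (2 - 2x) 1` on `[0,1]`. -/
noncomputable def mmap₂ (x : UI) : UI :=
  ⟨min (2 - 2 * x) 1, le_min (by have := x.2.2; linarith) zero_le_one, min_le_right _ _⟩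

/-
The second map is the first one followed by the reflection `σ t = 1 - t`, and the tent map `T`
is invariant under `σ`; hence `F^n(x) = {T^n x, 1 - T^n x}` for `n ≥ 1`. Since
`cos (π T t) = cos (2π t)`, we get `cos (π T^n t) = cos (2^n π t)`, so every open set contains,
at a fine enough dyadic scale `2^(-n)`, a point `x` with `T^n x ∈ {0, 1}` and a point `y` with
`T^n y = 1/2`. Then `F^n(x) = {0, 1}` and `F^n(y) = {1/2}` lie at Hausdorff distance `1/2`.
-/

open Real Set unitInterval

theorem mIter_succ_eq_pair {X : Type*} {f g s : X → X} (hfs : ∀ x, f (s x) = f x)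
    (hg : ∀ x, g x = s (f x)) (n : ℕ) (x : X) :
    mIter f g (n + 1) x = {f^[n + 1] x, s (f^[n + 1] x)} := by
  induction n with
  | zero =>
    rw [mIter, mIter, image_singleton, image_singleton, hg, singleton_union, Function.iterate_one]
  | succ n ih =>
    rw [mIter, ih, image_pair, image_pair, hfs, hg, hg, hfs, Function.iterate_succ_apply' f (n + 1),
      pair_eq_singleton, pair_eq_singleton, singleton_union]

theorem Metric.NonemptyCompacts.le_dist_of_mem {α : Type*} [MetricSpace α]
    {A B : TopologicalSpace.NonemptyCompacts α} {a : α} (ha : a ∈ A) {r : ℝ}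
    (h : ∀ b ∈ B, r ≤ dist a b) : r ≤ dist A B := by
  obtain ⟨b, hb, hab⟩ := B.isCompact.exists_infDist_eq_dist B.nonempty a
  calc r ≤ dist a b := h b hb
    _ = infDist a B := hab.symm
    _ ≤ dist A B := infDist_le_hausdorffDist_of_mem ha (edist_ne_top A B)

theorem exists_nat_lt_mem_Icc_div {k : ℕ} (hk : 0 < k) {t : ℝ} (ht : t ∈ Icc (0 : ℝ) 1) :
    ∃ m < k, t ∈ Icc ((m : ℝ) / k) ((m + 1) / k) := by
  have hk' : (0 : ℝ) < k := by exact_mod_cast hk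
  simp only [mem_Icc, div_le_iff₀ hk', le_div_iff₀ hk']
  rcases ht.2.lt_or_eq with ht1 | rfl
  · refine ⟨⌊t * k⌋₊, (Nat.floor_lt (by nlinarith [ht.1])).2 (by nlinarith), ?_, ?_⟩
    · exact Nat.floor_le (by nlinarith [ht.1])
    · exact (Nat.lt_floor_add_one _).le
  · refine ⟨k - 1, by omega, ?_, ?_⟩ <;> simp [Nat.cast_pred hk]

theorem eq_of_cos_pi_mul_eq {s t : ℝ} (hs : s ∈ Icc (0 : ℝ) 1) (ht : t ∈ Icc (0 : ℝ) 1)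
    (h : cos (π * s) = cos (π * t)) : s = t := by
  have mem (u : ℝ) (hu : u ∈ Icc (0 : ℝ) 1) : π * u ∈ Icc 0 π :=
    ⟨by nlinarith [pi_pos, hu.1], by nlinarith [pi_pos, hu.2]⟩
  exact mul_left_cancel₀ pi_ne_zero (injOn_cos (mem s hs) (mem t ht) h)

theorem coe_tent (x : UI) :
    (tent x : ℝ) = if (x : ℝ) ≤ 1 / 2 then 2 * (x : ℝ) else 2 - 2 * (x : ℝ) :=
  rfl

theorem coe_tentc (x : UI) :
    (tentc x : ℝ) = if (x : ℝ) ≤ 1 / 2 then 1 - 2 * (x : ℝ) else 2 * (x : ℝ) - 1 :=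
  rfl

theorem tentc_eq_symm_tent (x : UI) : tentc x = σ (tent x) := by
  ext
  rw [coe_tentc, coe_symm_eq, coe_tent]
  split_ifs <;> ring

theorem tent_symm (x : UI) : tent (σ x) = tent x := by
  ext
  rw [coe_tent, coe_tent, coe_symm_eq]
  split_ifs <;> linarith

theorem cos_pi_mul_tent (x : UI) : cos (π * tent x) = cos (2 * π * x) := by
  rw [coe_tent]
  split_ifs
  · ring_nf
  · rw [← cos_two_pi_sub]; ring_nf

theorem cos_pi_mul_tent_iterate (n : ℕ) (x : UI) :
    cos (π * tent^[n] x) = cos (2 ^ n * π * x) := by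
  induction n with
  | zero => simp
  | succ n ih =>
    rw [Function.iterate_succ_apply', cos_pi_mul_tent, mul_assoc, cos_two_mul, ih, ← cos_two_mul]
    ring_nf

theorem tent_iterate_eq_zero_or_one {n m : ℕ} {x : UI} (hx : (x : ℝ) = m / 2 ^ n) :
    (tent^[n] x : ℝ) = 0 ∨ (tent^[n] x : ℝ) = 1 := by
  have hcos : cos (π * tent^[n] x) = (-1) ^ m := by
    rw [cos_pi_mul_tent_iterate, hx, ← cos_nat_mul_pi]
    congr 1
    field_simp
  rcases Nat.even_or_odd m with hm | hm
  · left
    refine eq_of_cos_pi_mul_eq (tent^[n] x).2 ⟨le_rfl, zero_le_one⟩ ?_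
    rw [hcos, hm.neg_one_pow, mul_zero, cos_zero]
  · right
    refine eq_of_cos_pi_mul_eq (tent^[n] x).2 ⟨zero_le_one, le_rfl⟩ ?_
    rw [hcos, hm.neg_one_pow, mul_one, cos_pi]

theorem tent_iterate_eq_half {n m : ℕ} {x : UI} (hx : (x : ℝ) = (m + 1 / 2) / 2 ^ n) :
    (tent^[n] x : ℝ) = 1 / 2 := by
  refine eq_of_cos_pi_mul_eq (tent^[n] x).2 ⟨by norm_num, by norm_num⟩ ?_
  rw [cos_pi_mul_tent_iterate, hx, mul_one_div, cos_pi_div_two, cos_eq_zero_iff]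
  exact ⟨m, by push_cast; field_simp⟩

theorem exists_tent_iterate_endpoint_and_half (x₀ : UI) {ε : ℝ} (hε : 0 < ε) :
    ∃ n, 1 ≤ n ∧ ∃ x y : UI, dist x x₀ < ε ∧ dist y x₀ < ε ∧
      ((tent^[n] x : ℝ) = 0 ∨ (tent^[n] x : ℝ) = 1) ∧ (tent^[n] y : ℝ) = 1 / 2 := by
  obtain ⟨n, hn⟩ := exists_pow_lt_of_lt_one hε (by norm_num : (1 / 2 : ℝ) < 1)
  have hscale : 1 / (2 : ℝ) ^ (n + 1) < ε := by
    calc 1 / (2 : ℝ) ^ (n + 1) ≤ (1 / 2) ^ n := by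
          rw [one_div_pow]; gcongr <;> norm_num
      _ < ε := hn
  obtain ⟨m, hm, hx₀⟩ := exists_nat_lt_mem_Icc_div (pow_pos two_pos (n + 1)) x₀.2
  push_cast at hx₀
  have hpos : (0 : ℝ) < 2 ^ (n + 1) := by positivity
  have hm' : (m : ℝ) + 1 ≤ 2 ^ (n + 1) := by exact_mod_cast hm
  have hxI : (m : ℝ) / 2 ^ (n + 1) ∈ Icc ((m : ℝ) / 2 ^ (n + 1)) ((m + 1) / 2 ^ (n + 1)) :=
    ⟨le_rfl, by gcongr; linarith⟩
  have hyI : ((m : ℝ) + 1 / 2) / 2 ^ (n + 1) ∈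
      Icc ((m : ℝ) / 2 ^ (n + 1)) ((m + 1) / 2 ^ (n + 1)) :=
    ⟨by gcongr; linarith, by gcongr; linarith⟩
  have hwidth : ((m : ℝ) + 1) / 2 ^ (n + 1) - m / 2 ^ (n + 1) = 1 / 2 ^ (n + 1) := by ring
  have hsub : Icc ((m : ℝ) / 2 ^ (n + 1)) ((m + 1) / 2 ^ (n + 1)) ⊆ Icc 0 1 :=
    Icc_subset_Icc (by positivity) ((div_le_one hpos).2 hm')
  let x : UI := ⟨_, hsub hxI⟩
  let y : UI := ⟨_, hsub hyI⟩
  refine ⟨n + 1, le_add_self, x, y, ?_, ?_, tent_iterate_eq_zero_or_one rfl,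
    tent_iterate_eq_half rfl⟩
  · exact (dist_le_of_mem_Icc hxI hx₀).trans_lt (hwidth ▸ hscale)
  · exact (dist_le_of_mem_Icc hyI hx₀).trans_lt (hwidth ▸ hscale)

/-- the multiple mapping `F = {tent, 1 - tent}` on `[0,1]` is
Hausdorff metric sensitive. -/
theorem stmt8 : MSensitive tent tentc := by
  refine ⟨1 / 4, by norm_num, fun U hU ⟨x₀, hx₀⟩ ↦ ?_⟩
  obtain ⟨ε, hε, hball⟩ := Metric.isOpen_iff.1 hU x₀ hx₀
  obtain ⟨n, hn, x, y, hx, hy, hTx, hTy⟩ := exists_tent_iterate_endpoint_and_half x₀ hε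
  refine ⟨x, hball hx, y, hball hy, n, hn, ?_⟩
  obtain ⟨k, rfl⟩ := Nat.exists_eq_add_of_le' hn
  have hF : ∀ z, mIter tent tentc (k + 1) z = {tent^[k + 1] z, σ (tent^[k + 1] z)} :=
    mIter_succ_eq_pair tent_symm tentc_eq_symm_tent k
  have hFy : ∀ b ∈ mIter tent tentc (k + 1) y, (b : ℝ) = 1 / 2 := by
    rw [hF]
    rintro b (rfl | rfl)
    · exact hTy
    · rw [coe_symm_eq, hTy]; norm_num
  refine lt_of_lt_of_le (by norm_num : (1 / 4 : ℝ) < 1 / 2)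
    (Metric.NonemptyCompacts.le_dist_of_mem (a := tent^[k + 1] x) ?_ fun b hb ↦ ?_)
  · show _ ∈ mIter tent tentc (k + 1) x
    rw [hF]
    exact mem_insert _ _
  · rw [Subtype.dist_eq, Real.dist_eq, hFy b hb]
    rcases hTx with h | h <;> rw [h] <;> norm_num
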